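/- arXiv:1905.12574 — 2 statements merged into one kernel-verified Lean document; each statement's English description precedes it below -/
import Mathlib

section
/- Let N, N' be positive integers and k, k' nonnegative integers. Let a_0 ≤ … ≤ a_N, a'_0 ≤ … ≤ a'_{N'}, d_1 ≤ … ≤ d_k, d'_1 ≤ … ≤ d'_{k'} be positive integers such that a_i ≠ d_j for all i, j and a'_{i'} ≠ d'_{j'} for all i', j'. Suppose that the equality (∏_{j=1}^k (1 - t^{d_j})) / (∏_{i=0}^N (1 - t^{a_i})) = (∏_{j'=1}^{k'} (1 - t^{d'_{j'}})) / (∏_{i'=0}^{N'} (1 - t^{a'_{i'}})) holds as rational functions in the variable t. Then N = N', k = k', a_i = a'_i for every 0 ≤ i ≤ N, and d_j = d'_j for every 1 ≤ j ≤ k. -/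
/-!
Clearing denominators turns the hypothesis into the polynomial identity
`∏_{e ∈ D + A'} (1 - X^e) = ∏_{e ∈ D' + A} (1 - X^e)`, where `A, D, A', D'` are the multisets of
exponents. A product `∏_{e ∈ M} (1 - X^e)` with all `e > 0` determines `M`: if `m` is the
smallest exponent, the first nonconstant term of the product is `-(count m M) X^m`, and after
cancelling `1 - X^m` one inducts. Since `D` and `A` are disjoint, as are `D'` and `A'`, the equality
`D + A' = D' + A` splits into `D = D'` and `A = A'`, and a monotone enumeration is determined by
the multiset of its values.
-/

open Polynomial

lemma Multiset.eq_and_eq_of_add_eq_add_of_disjoint {α : Type*} [DecidableEq α]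
    {D A D' A' : Multiset α} (h : D + A' = D' + A) (hDA : Disjoint D A) (hDA' : Disjoint D' A') :
    D = D' ∧ A = A' := by
  have hle : ∀ {D A D' A' : Multiset α}, D + A' = D' + A → Disjoint D A → D ≤ D' := by
    intro D A D' A' h hDA
    refine Multiset.le_iff_count.mpr fun v => ?_
    have hv := congrArg (Multiset.count v) h
    simp only [Multiset.count_add] at hv
    by_cases hvD : v ∈ D
    · have := Multiset.count_eq_zero.mpr (Multiset.disjoint_left.mp hDA hvD)
      omega
    · simp [Multiset.count_eq_zero.mpr hvD]
  have hD : D = D' := le_antisymm (hle h hDA) (hle h.symm hDA')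
  subst hD
  exact ⟨rfl, (add_left_cancel h).symm⟩

lemma Finset.eqOn_of_map_val_eq {α β : Type*} [LinearOrder α] [LinearOrder β] {s : Finset α}
    {f g : α → β} (hf : MonotoneOn f s) (hg : MonotoneOn g s) (h : s.val.map f = s.val.map g) :
    Set.EqOn f g s := by
  have hsorted : ∀ {f : α → β}, MonotoneOn f s → (s.sort.map f).Pairwise (· ≤ ·) := fun hf =>
    List.pairwise_map.mpr <| (s.pairwise_sort (· ≤ ·)).imp_of_mem fun ha hb hab =>
      hf (s.mem_sort _ |>.mp ha) (s.mem_sort _ |>.mp hb) hab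
  have hlist : s.sort.map f = s.sort.map g := by
    refine List.Perm.eq_of_pairwise' (hsorted hf) (hsorted hg) (Multiset.coe_eq_coe.mp ?_)
    rw [← Multiset.map_coe, ← Multiset.map_coe, Finset.sort_eq, h]
  exact fun x hx => List.map_inj_left.mp hlist x ((s.mem_sort _).mpr hx)

namespace Polynomial

section CommRing

variable {R : Type*} [CommRing R]

noncomputable def prodOneSubXPow (M : Multiset ℕ) : R[X] :=
  (M.map fun e => 1 - X ^ e).prod

@[simp]
lemma prodOneSubXPow_cons (e : ℕ) (M : Multiset ℕ) :
    (prodOneSubXPow (e ::ₘ M) : R[X]) = (1 - X ^ e) * prodOneSubXPow M := by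
  simp [prodOneSubXPow]

lemma prodOneSubXPow_add (M M' : Multiset ℕ) :
    (prodOneSubXPow (M + M') : R[X]) = prodOneSubXPow M * prodOneSubXPow M' := by
  simp [prodOneSubXPow]

lemma coeff_zero_prodOneSubXPow {M : Multiset ℕ} (hM : ∀ e ∈ M, 0 < e) :
    (prodOneSubXPow M : R[X]).coeff 0 = 1 := by
  rw [prodOneSubXPow, coeff_zero_multiset_prod, Multiset.map_map]
  refine Multiset.prod_eq_one fun c hc => ?_
  obtain ⟨e, he, rfl⟩ := Multiset.mem_map.mp hc
  simp [coeff_one, (hM e he).ne]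

lemma coeff_prodOneSubXPow_of_le {M : Multiset ℕ} {m : ℕ} (hm : 0 < m) (hM : ∀ e ∈ M, m ≤ e) :
    (prodOneSubXPow M : R[X]).coeff m = -(M.count m : R) := by
  induction M using Multiset.induction with
  | empty => simp [prodOneSubXPow, coeff_one, hm.ne']
  | cons e M ih =>
    have hM' : ∀ x ∈ M, m ≤ x := fun x hx => hM x (Multiset.mem_cons_of_mem hx)
    have hme : m ≤ e := hM e (Multiset.mem_cons_self e M)
    rw [prodOneSubXPow_cons, sub_mul, one_mul, coeff_sub, coeff_X_pow_mul', ih hM']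
    rcases hme.eq_or_lt with rfl | hlt
    · rw [if_pos le_rfl, Nat.sub_self,
        coeff_zero_prodOneSubXPow fun x hx => hm.trans_le (hM' x hx), Multiset.count_cons_self]
      push_cast
      ring
    · rw [if_neg (not_le.mpr hlt), sub_zero, Multiset.count_cons_of_ne hlt.ne]

lemma prodOneSubXPow_ne_zero [Nontrivial R] {M : Multiset ℕ} (hM : ∀ e ∈ M, 0 < e) :
    (prodOneSubXPow M : R[X]) ≠ 0 := fun h0 => by
  simpa [h0] using coeff_zero_prodOneSubXPow (R := R) hM

lemma isLeftRegular_one_sub_X_pow [Nontrivial R] {m : ℕ} (hm : 0 < m) :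
    IsLeftRegular (1 - X ^ m : R[X]) := by
  have hmonic := (monic_X_pow_sub_C (1 : R) hm.ne').isRegular.left
  rw [show (1 - X ^ m : R[X]) = -1 * (X ^ m - C 1) by simp]
  exact isUnit_one.neg.isRegular.left.mul hmonic

theorem prodOneSubXPow_injOn [CharZero R] :
    Set.InjOn (prodOneSubXPow : Multiset ℕ → R[X]) {M | ∀ e ∈ M, 0 < e} := by
  intro M
  induction M using Multiset.strongInductionOn with
  | ih M IH =>
  intro hM M' hM' h
  rcases eq_or_ne (M + M') 0 with h0 | h0
  · obtain ⟨rfl, rfl⟩ := add_eq_zero.mp h0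
    rfl
  obtain ⟨m, hmem, hmin⟩ := Multiset.exists_min_image id h0
  have hm : 0 < m := by
    rcases Multiset.mem_add.mp hmem with hmM | hmM'
    exacts [hM m hmM, hM' m hmM']
  have hcount : M.count m = M'.count m := by
    have := congrArg (coeff · m) h
    simpa [coeff_prodOneSubXPow_of_le hm fun e he => hmin e (Multiset.mem_add.mpr (.inl he)),
      coeff_prodOneSubXPow_of_le hm fun e he => hmin e (Multiset.mem_add.mpr (.inr he))] using this
  have hmM : m ∈ M ∧ m ∈ M' := by
    simp only [← Multiset.count_pos, hcount, and_self]
    rcases Multiset.mem_add.mp hmem with hmM | hmM'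
    · rwa [← hcount, Multiset.count_pos]
    · rwa [Multiset.count_pos]
  rw [← Multiset.cons_erase hmM.1, ← Multiset.cons_erase hmM.2] at h ⊢
  rw [prodOneSubXPow_cons, prodOneSubXPow_cons] at h
  congr 1
  exact IH _ (Multiset.erase_lt.mpr hmM.1) (fun e he => hM e (Multiset.mem_of_mem_erase he))
    (fun e he => hM' e (Multiset.mem_of_mem_erase he)) (isLeftRegular_one_sub_X_pow hm h)

end CommRing

section RatFunc

variable {K : Type*} [Field K]

lemma algebraMap_prodOneSubXPow_map {ι : Type*} (s : Finset ι) (f : ι → ℕ) :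
    algebraMap K[X] (RatFunc K) (prodOneSubXPow (s.val.map f)) =
      ∏ i ∈ s, (1 - RatFunc.X ^ f i) := by
  simp [prodOneSubXPow, Multiset.map_map, RatFunc.algebraMap_X]

theorem eq_and_eq_of_algebraMap_prodOneSubXPow_div_eq [CharZero K] {D A D' A' : Multiset ℕ}
    (hD : ∀ e ∈ D, 0 < e) (hA : ∀ e ∈ A, 0 < e) (hD' : ∀ e ∈ D', 0 < e) (hA' : ∀ e ∈ A', 0 < e)
    (hDA : Disjoint D A) (hDA' : Disjoint D' A')
    (h : algebraMap K[X] (RatFunc K) (prodOneSubXPow D) /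
          algebraMap K[X] (RatFunc K) (prodOneSubXPow A) =
        algebraMap K[X] (RatFunc K) (prodOneSubXPow D') /
          algebraMap K[X] (RatFunc K) (prodOneSubXPow A')) :
    D = D' ∧ A = A' := by
  have hne : ∀ {M : Multiset ℕ}, (∀ e ∈ M, 0 < e) →
      algebraMap K[X] (RatFunc K) (prodOneSubXPow M) ≠ 0 := fun hM =>
    RatFunc.algebraMap_ne_zero (prodOneSubXPow_ne_zero hM)
  rw [div_eq_div_iff (hne hA) (hne hA'), ← map_mul, ← map_mul, ← prodOneSubXPow_add,
    ← prodOneSubXPow_add] at h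
  have hpos : ∀ {M M' : Multiset ℕ}, (∀ e ∈ M, 0 < e) → (∀ e ∈ M', 0 < e) →
      ∀ e ∈ M + M', 0 < e := fun hM hM' e he =>
    (Multiset.mem_add.mp he).elim (hM e) (hM' e)
  exact Multiset.eq_and_eq_of_add_eq_add_of_disjoint
    (prodOneSubXPow_injOn (hpos hD hA') (hpos hD' hA) (RatFunc.algebraMap_injective K h)) hDA hDA'

end RatFunc

end Polynomial


theorem stmt_0_general (N N' k k' : ℕ)
    (a a' d d' : ℕ → ℕ)
    (hapos : ∀ i ≤ N, 0 < a i) (ha'pos : ∀ i ≤ N', 0 < a' i)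
    (hdpos : ∀ j, 1 ≤ j → j ≤ k → 0 < d j) (hd'pos : ∀ j, 1 ≤ j → j ≤ k' → 0 < d' j)
    (hamono : ∀ i j, i ≤ j → j ≤ N → a i ≤ a j)
    (ha'mono : ∀ i j, i ≤ j → j ≤ N' → a' i ≤ a' j)
    (hdmono : ∀ i j, 1 ≤ i → i ≤ j → j ≤ k → d i ≤ d j)
    (hd'mono : ∀ i j, 1 ≤ i → i ≤ j → j ≤ k' → d' i ≤ d' j)
    (had : ∀ i ≤ N, ∀ j, 1 ≤ j → j ≤ k → a i ≠ d j)
    (ha'd' : ∀ i ≤ N', ∀ j, 1 ≤ j → j ≤ k' → a' i ≠ d' j)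
    (heq :
      (∏ j ∈ Finset.Icc 1 k, (1 - (RatFunc.X : RatFunc ℚ) ^ d j)) /
          (∏ i ∈ Finset.range (N + 1), (1 - (RatFunc.X : RatFunc ℚ) ^ a i)) =
      (∏ j ∈ Finset.Icc 1 k', (1 - (RatFunc.X : RatFunc ℚ) ^ d' j)) /
          (∏ i ∈ Finset.range (N' + 1), (1 - (RatFunc.X : RatFunc ℚ) ^ a' i))) :
    N = N' ∧ k = k' ∧ (∀ i ≤ N, a i = a' i) ∧ (∀ j, 1 ≤ j → j ≤ k → d j = d' j) := by
  simp only [← algebraMap_prodOneSubXPow_map] at heq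
  obtain ⟨hD, hA⟩ := eq_and_eq_of_algebraMap_prodOneSubXPow_div_eq
    (Multiset.forall_mem_map_iff.2 fun j hj => (Finset.mem_Icc.1 hj).elim (hdpos j))
    (Multiset.forall_mem_map_iff.2 fun i hi => hapos i (Finset.mem_range_succ_iff.1 hi))
    (Multiset.forall_mem_map_iff.2 fun j hj => (Finset.mem_Icc.1 hj).elim (hd'pos j))
    (Multiset.forall_mem_map_iff.2 fun i hi => ha'pos i (Finset.mem_range_succ_iff.1 hi))
    (Multiset.disjoint_map_map.2 fun j hj i hi =>
      Ne.symm <| (Finset.mem_Icc.1 hj).elim (had i (Finset.mem_range_succ_iff.1 hi) j))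
    (Multiset.disjoint_map_map.2 fun j hj i hi =>
      Ne.symm <| (Finset.mem_Icc.1 hj).elim (ha'd' i (Finset.mem_range_succ_iff.1 hi) j))
    heq
  obtain rfl : N = N' := by simpa using congrArg Multiset.card hA
  obtain rfl : k = k' := by simpa using congrArg Multiset.card hD
  refine ⟨rfl, rfl, fun i hi => ?_, fun j hj1 hjk => ?_⟩
  · refine Finset.eqOn_of_map_val_eq ?_ ?_ hA (Finset.mem_range_succ_iff.2 hi)
    · exact fun i _ j hj hij => hamono i j hij (Finset.mem_range_succ_iff.1 hj)
    · exact fun i _ j hj hij => ha'mono i j hij (Finset.mem_range_succ_iff.1 hj)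
  · refine Finset.eqOn_of_map_val_eq ?_ ?_ hD (Finset.mem_Icc.2 ⟨hj1, hjk⟩)
    · exact fun i hi j hj hij => hdmono i j (Finset.mem_Icc.1 hi).1 hij (Finset.mem_Icc.1 hj).2
    · exact fun i hi j hj hij => hd'mono i j (Finset.mem_Icc.1 hi).1 hij (Finset.mem_Icc.1 hj).2

/-- Uniqueness of weight/degree data from equality of Poincaré series as rational
functions (Lemma on ratios of products of `1 - t^e`). -/
theorem stmt_0 (N N' k k' : ℕ) (hN : 0 < N) (hN' : 0 < N')
    (a a' d d' : ℕ → ℕ)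
    (hapos : ∀ i ≤ N, 0 < a i) (ha'pos : ∀ i ≤ N', 0 < a' i)
    (hdpos : ∀ j, 1 ≤ j → j ≤ k → 0 < d j) (hd'pos : ∀ j, 1 ≤ j → j ≤ k' → 0 < d' j)
    (hamono : ∀ i j, i ≤ j → j ≤ N → a i ≤ a j)
    (ha'mono : ∀ i j, i ≤ j → j ≤ N' → a' i ≤ a' j)
    (hdmono : ∀ i j, 1 ≤ i → i ≤ j → j ≤ k → d i ≤ d j)
    (hd'mono : ∀ i j, 1 ≤ i → i ≤ j → j ≤ k' → d' i ≤ d' j)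
    (had : ∀ i ≤ N, ∀ j, 1 ≤ j → j ≤ k → a i ≠ d j)
    (ha'd' : ∀ i ≤ N', ∀ j, 1 ≤ j → j ≤ k' → a' i ≠ d' j)
    (heq :
      (∏ j ∈ Finset.Icc 1 k, (1 - (RatFunc.X : RatFunc ℚ) ^ d j)) /
          (∏ i ∈ Finset.range (N + 1), (1 - (RatFunc.X : RatFunc ℚ) ^ a i)) =
      (∏ j ∈ Finset.Icc 1 k', (1 - (RatFunc.X : RatFunc ℚ) ^ d' j)) /
          (∏ i ∈ Finset.range (N' + 1), (1 - (RatFunc.X : RatFunc ℚ) ^ a' i))) :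
    N = N' ∧ k = k' ∧ (∀ i ≤ N, a i = a' i) ∧ (∀ j, 1 ≤ j → j ≤ k → d j = d' j) :=
  stmt_0_general N N' k k' a a' d d' hapos ha'pos hdpos hd'pos hamono ha'mono hdmono hd'mono had
    ha'd' heq
end

section
/- Let a_0, …, a_N and d_1, …, d_k and a'_0, …, a'_{N'} and d'_1, …, d'_{k'} be positive integers, each sequence sorted in nondecreasing order, such that a_i ≠ d_j for all i, j and a'_{i'} ≠ d'_{j'} for all i', j'. Suppose the formal power series ∏_{j=1}^k (1 - t^{d_j}) · ∏_{i'=0}^{N'} (1 - t^{a'_{i'}}) and ∏_{j'=1}^{k'} (1 - t^{d'_{j'}}) · ∏_{i=0}^{N} (1 - t^{a_i}) are equal as polynomials. Then the multiset {a_0,…,a_N} equals {a'_0,…,a'_{N'}} and the multiset {d_1,…,d_k} equals {d'_1,…,d'_{k'}}. -/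
open Polynomial

lemma coeff_zero_prod_aux (s : Multiset ℕ) (hs : ∀ e ∈ s, 0 < e) :
    ((s.map fun e => (1 - X ^ e : ℤ[X])).prod).coeff 0 = 1 := by
  induction s using Multiset.induction with
  | empty => simp
  | cons e s ih =>
    have he : 0 < e := hs e (Multiset.mem_cons_self _ _)
    simp only [Multiset.map_cons, Multiset.prod_cons]
    rw [Polynomial.mul_coeff_zero, ih (fun x hx => hs x (Multiset.mem_cons_of_mem hx))]
    simp [Polynomial.coeff_one, Polynomial.coeff_X_pow, he.ne', he.ne]

lemma coeff_min_prod_aux (s : Multiset ℕ) (m : ℕ) (hm : 0 < m)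
    (hs : ∀ e ∈ s, m ≤ e) :
    ((s.map fun e => (1 - X ^ e : ℤ[X])).prod).coeff m = -(s.count m : ℤ) := by
  induction s using Multiset.induction with
  | empty => simp [Polynomial.coeff_one, hm.ne']
  | cons e s ih =>
    have he : m ≤ e := hs e (Multiset.mem_cons_self _ _)
    have hs' : ∀ x ∈ s, m ≤ x := fun x hx => hs x (Multiset.mem_cons_of_mem hx)
    simp only [Multiset.map_cons, Multiset.prod_cons]
    rw [sub_mul, one_mul, Polynomial.coeff_sub, ih hs', mul_comm,
      Polynomial.coeff_mul_X_pow']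
    rcases eq_or_lt_of_le he with h | h
    · subst h
      rw [if_pos le_rfl, Nat.sub_self,
        coeff_zero_prod_aux s (fun x hx => lt_of_lt_of_le hm (hs' x hx))]
      simp [Multiset.count_cons_self]
      ring
    · rw [if_neg (not_le.mpr h), Multiset.count_cons_of_ne h.ne]
      ring

lemma key_prod_inj (n : ℕ) : ∀ s t : Multiset ℕ, s.card + t.card = n →
    (∀ e ∈ s, 0 < e) → (∀ e ∈ t, 0 < e) →
    (s.map fun e => (1 - X ^ e : ℤ[X])).prod = (t.map fun e => (1 - X ^ e : ℤ[X])).prod →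
    s = t := by
  induction n using Nat.strong_induction_on with
  | _ n ih =>
    intro s t hcard hs ht hprod
    rcases eq_or_ne (s + t) 0 with h0 | h0
    · have h1 : s = 0 := by
        have := congrArg Multiset.card h0
        simp at this
        exact this.1
      have h2 : t = 0 := by
        have := congrArg Multiset.card h0
        simp at this
        exact this.2
      rw [h1, h2]
    · have hne : (s + t).toFinset.Nonempty := by
        rw [Multiset.toFinset_nonempty]
        exact h0
      set m := (s + t).toFinset.min' hne with hmdef
      have hmmem : m ∈ s + t := by
        have := Finset.min'_mem _ hne
        rwa [Multiset.mem_toFinset] at this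
      have hmle : ∀ e ∈ s + t, m ≤ e := fun e he =>
        Finset.min'_le _ e (Multiset.mem_toFinset.mpr he)
      have hmpos : 0 < m := by
        rcases Multiset.mem_add.mp hmmem with h | h
        · exact hs m h
        · exact ht m h
      have hcnt : s.count m = t.count m := by
        have h1 := coeff_min_prod_aux s m hmpos
          (fun e he => hmle e (Multiset.mem_add.mpr (Or.inl he)))
        have h2 := coeff_min_prod_aux t m hmpos
          (fun e he => hmle e (Multiset.mem_add.mpr (Or.inr he)))
        rw [hprod, h2] at h1
        exact_mod_cast (neg_inj.mp h1).symm
      have hms : m ∈ s := by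
        rcases Multiset.mem_add.mp hmmem with h | h
        · exact h
        · rw [← Multiset.count_pos, hcnt, Multiset.count_pos]; exact h
      have hmt : m ∈ t := by
        rw [← Multiset.count_pos, ← hcnt, Multiset.count_pos]; exact hms
      have hps : ((s.erase m).map fun e => (1 - X ^ e : ℤ[X])).prod *
          (1 - X ^ m) = (s.map fun e => (1 - X ^ e : ℤ[X])).prod := by
        rw [mul_comm]
        exact Multiset.prod_map_erase (f := fun e => (1 - X ^ e : ℤ[X])) hms
      have hpt : ((t.erase m).map fun e => (1 - X ^ e : ℤ[X])).prod *
          (1 - X ^ m) = (t.map fun e => (1 - X ^ e : ℤ[X])).prod := by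
        rw [mul_comm]
        exact Multiset.prod_map_erase (f := fun e => (1 - X ^ e : ℤ[X])) hmt
      have hX : (1 - X ^ m : ℤ[X]) ≠ 0 := by
        intro h
        have := congrArg (fun p => p.coeff m) h
        simp [Polynomial.coeff_one, Polynomial.coeff_X_pow, hmpos.ne'] at this
      have hrec : s.erase m = t.erase m := by
        refine ih (s.card - 1 + (t.card - 1)) ?_ _ _ ?_ ?_ ?_ ?_
        · have h1 : 1 ≤ s.card := (Multiset.card_pos_iff_exists_mem.mpr ⟨m, hms⟩)
          have h2 : 1 ≤ t.card := (Multiset.card_pos_iff_exists_mem.mpr ⟨m, hmt⟩)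
          omega
        · rw [Multiset.card_erase_of_mem hms, Multiset.card_erase_of_mem hmt]
          rfl
        · exact fun e he => hs e (Multiset.mem_of_mem_erase he)
        · exact fun e he => ht e (Multiset.mem_of_mem_erase he)
        · exact mul_right_cancel₀ hX (by rw [hps, hpt, hprod])
      calc s = m ::ₘ s.erase m := (Multiset.cons_erase hms).symm
        _ = m ::ₘ t.erase m := by rw [hrec]
        _ = t := Multiset.cons_erase hmt

/-- Cross-multiplied uniqueness lemma: equality of the products
`∏ (1 - t^{dⱼ}) · ∏ (1 - t^{a'ᵢ}) = ∏ (1 - t^{d'ⱼ}) · ∏ (1 - t^{aᵢ})` as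
polynomials forces equality of the multisets of weights and of degrees,
provided no weight equals a degree within each presentation. -/
theorem stmt_9 (N N' k k' : ℕ) (a : Fin (N + 1) → ℕ) (a' : Fin (N' + 1) → ℕ)
    (d : Fin k → ℕ) (d' : Fin k' → ℕ)
    (hapos : ∀ i, 0 < a i) (ha'pos : ∀ i, 0 < a' i)
    (hdpos : ∀ j, 0 < d j) (hd'pos : ∀ j, 0 < d' j)
    (hamono : Monotone a) (ha'mono : Monotone a')
    (hdmono : Monotone d) (hd'mono : Monotone d')
    (had : ∀ i j, a i ≠ d j) (ha'd' : ∀ i j, a' i ≠ d' j)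
    (heq : (∏ j, (1 - (Polynomial.X : Polynomial ℤ) ^ d j)) *
             (∏ i, (1 - (Polynomial.X : Polynomial ℤ) ^ a' i)) =
           (∏ j, (1 - (Polynomial.X : Polynomial ℤ) ^ d' j)) *
             (∏ i, (1 - (Polynomial.X : Polynomial ℤ) ^ a i))) :
    Finset.univ.val.map a = Finset.univ.val.map a' ∧
    Finset.univ.val.map d = Finset.univ.val.map d' := by
  classical
  set A : Multiset ℕ := Finset.univ.val.map a with hA
  set A' : Multiset ℕ := Finset.univ.val.map a' with hA'
  set D : Multiset ℕ := Finset.univ.val.map d with hD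
  set D' : Multiset ℕ := Finset.univ.val.map d' with hD'
  have hprod : ∀ (M : Type) [Fintype M] (f : M → ℕ),
      (∏ i : M, (1 - (X : ℤ[X]) ^ f i)) =
        ((Finset.univ.val.map f).map fun e => (1 - X ^ e : ℤ[X])).prod := by
    intro M _ f
    rw [Multiset.map_map]
    rfl
  have hkey : D + A' = D' + A := by
    apply key_prod_inj ((D + A').card + (D' + A).card) _ _ rfl
    · intro e he
      rcases Multiset.mem_add.mp he with h | h
      · obtain ⟨j, _, rfl⟩ := Multiset.mem_map.mp h
        exact hdpos j
      · obtain ⟨i, _, rfl⟩ := Multiset.mem_map.mp h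
        exact ha'pos i
    · intro e he
      rcases Multiset.mem_add.mp he with h | h
      · obtain ⟨j, _, rfl⟩ := Multiset.mem_map.mp h
        exact hd'pos j
      · obtain ⟨i, _, rfl⟩ := Multiset.mem_map.mp h
        exact hapos i
    · rw [Multiset.map_add, Multiset.map_add, Multiset.prod_add, Multiset.prod_add,
        ← hprod _ d, ← hprod _ a', ← hprod _ d', ← hprod _ a]
      exact heq
  have hdisj : ∀ x, x ∈ A → x ∉ D := by
    intro x hx hxd
    obtain ⟨i, _, rfl⟩ := Multiset.mem_map.mp hx
    obtain ⟨j, _, hj⟩ := Multiset.mem_map.mp hxd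
    exact had i j hj.symm
  have hdisj' : ∀ x, x ∈ A' → x ∉ D' := by
    intro x hx hxd
    obtain ⟨i, _, rfl⟩ := Multiset.mem_map.mp hx
    obtain ⟨j, _, hj⟩ := Multiset.mem_map.mp hxd
    exact ha'd' i j hj.symm
  have hcount : ∀ x, A.count x = A'.count x ∧ D.count x = D'.count x := by
    intro x
    have h1 : D.count x + A'.count x = D'.count x + A.count x := by
      have := congrArg (Multiset.count x) hkey
      rwa [Multiset.count_add, Multiset.count_add] at this
    have h2 : D.count x = 0 ∨ A.count x = 0 := by
      by_contra h
      push_neg at h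
      exact hdisj x (Multiset.count_pos.mp (Nat.pos_of_ne_zero h.2))
        (Multiset.count_pos.mp (Nat.pos_of_ne_zero h.1))
    have h3 : D'.count x = 0 ∨ A'.count x = 0 := by
      by_contra h
      push_neg at h
      exact hdisj' x (Multiset.count_pos.mp (Nat.pos_of_ne_zero h.2))
        (Multiset.count_pos.mp (Nat.pos_of_ne_zero h.1))
    rcases h2 with h2 | h2 <;> rcases h3 with h3 | h3 <;> omega
  exact ⟨Multiset.ext.mpr fun x => (hcount x).1, Multiset.ext.mpr fun x => (hcount x).2⟩
end
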